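/- For every λ > 0 and every x ∈ ℝ, ∫₀^∞ √(λ/(4πr)) · exp(−λx²/(4r)) · exp(−r) dr = (√λ/2) · exp(−√λ·|x|). In other words, if x | (r, λ) ~ N(0, 2r/λ) and r ~ Exp(1), then x | λ ~ Laplace(0, √λ). -/

import Mathlib

/-!
With `a = √λ |x| / 2` the integrand is `√λ / (2√π) · exp(-a²/r - r) / √r`. The substitution `r = t²`
and `a²/t² + t² = (t - a/t)² + 2a` reduce the claim to the Cauchy–Schlömilch identity
`∫₀^∞ exp(-(t - a/t)²) dt = √π / 2`. Since the integrand `f` of the latter is invariant under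
`t ↦ a/t`, the inversion gives `∫₀^∞ (a/t²) f = ∫₀^∞ f`, while `u = t - a/t`, a bijection of
`(0, ∞)` onto `ℝ`, gives `∫₀^∞ (1 + a/t²) f = ∫_ℝ exp(-u²) du = √π`.
-/

open Real Set MeasureTheory

section SubstitutionsOnIoi

variable {E : Type*} [NormedAddCommGroup E] [NormedSpace ℝ E] {a : ℝ}

lemma hasDerivAt_const_div {t : ℝ} (ht : t ≠ 0) :
    HasDerivAt (fun t : ℝ => a / t) (-(a / t ^ 2)) t := by
  simpa [div_eq_mul_inv] using (hasDerivAt_inv ht).const_mul a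

lemma integral_comp_const_div_Ioi (ha : 0 < a) (g : ℝ → E) :
    ∫ t in Ioi 0, (a / t ^ 2) • g (a / t) = ∫ t in Ioi 0, g t := by
  have himage : (fun t : ℝ => a / t) '' Ioi 0 = Ioi 0 := by
    refine Subset.antisymm (image_subset_iff.2 fun t (ht : 0 < t) => div_pos ha ht) fun t ht => ?_
    exact ⟨a / t, div_pos ha ht, div_div_cancel₀ ha.ne'⟩
  have hinj : InjOn (fun t : ℝ => a / t) (Ioi 0) := fun s _ t _ hst => by
    simpa [div_div_cancel₀ ha.ne'] using congrArg (a / ·) hst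
  have := integral_image_eq_integral_abs_deriv_smul measurableSet_Ioi
    (fun t ht => (hasDerivAt_const_div (ne_of_gt ht)).hasDerivWithinAt) hinj g
  rw [himage] at this
  refine this ▸ setIntegral_congr_fun measurableSet_Ioi fun t (ht : 0 < t) => ?_
  rw [abs_neg, abs_of_pos (by positivity)]

lemma hasDerivAt_sub_const_div {t : ℝ} (ht : t ≠ 0) :
    HasDerivAt (fun t : ℝ => t - a / t) (1 + a / t ^ 2) t := by
  have := (hasDerivAt_id' t).fun_sub (hasDerivAt_const_div (a := a) ht)
  rwa [sub_neg_eq_add] at this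

lemma strictMonoOn_sub_const_div (ha : 0 ≤ a) :
    StrictMonoOn (fun t : ℝ => t - a / t) (Ioi 0) := by
  intro s (hs : 0 < s) t (ht : 0 < t) hst
  have : a / t ≤ a / s := div_le_div_of_nonneg_left ha hs hst.le
  simp only
  linarith

lemma image_sub_const_div_Ioi (ha : 0 < a) : (fun t : ℝ => t - a / t) '' Ioi 0 = univ := by
  refine eq_univ_of_forall fun u => ?_
  -- the positive root of `t² - u t - a = 0`
  set s := √(u ^ 2 + 4 * a)
  have hs : s ^ 2 = u ^ 2 + 4 * a := sq_sqrt (by positivity)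
  have hus : 0 < u + s := by
    have : |u| < s := by
      rw [← sqrt_sq_eq_abs]
      exact sqrt_lt_sqrt (sq_nonneg u) (by linarith)
    linarith [neg_abs_le u]
  refine ⟨(u + s) / 2, half_pos hus, ?_⟩
  field_simp
  linear_combination hs

lemma integral_comp_sub_const_div_Ioi (ha : 0 < a) (g : ℝ → E) :
    ∫ t in Ioi 0, (1 + a / t ^ 2) • g (t - a / t) = ∫ u, g u := by
  have := integral_image_eq_integral_abs_deriv_smul measurableSet_Ioi
    (fun t ht => (hasDerivAt_sub_const_div (ne_of_gt ht)).hasDerivWithinAt)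
    (strictMonoOn_sub_const_div ha.le).injOn g
  rw [image_sub_const_div_Ioi ha, Measure.restrict_univ] at this
  refine this ▸ setIntegral_congr_fun measurableSet_Ioi fun t _ => ?_
  rw [abs_of_pos (by positivity)]

lemma integrableOn_comp_sub_const_div_Ioi_iff (ha : 0 < a) (g : ℝ → E) :
    IntegrableOn (fun t => (1 + a / t ^ 2) • g (t - a / t)) (Ioi 0) ↔ Integrable g := by
  have := integrableOn_image_iff_integrableOn_abs_deriv_smul measurableSet_Ioi
    (fun t ht => (hasDerivAt_sub_const_div (ne_of_gt ht)).hasDerivWithinAt)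
    (strictMonoOn_sub_const_div ha.le).injOn g
  rw [image_sub_const_div_Ioi ha, integrableOn_univ] at this
  rw [this]
  exact integrableOn_congr_fun (fun t _ => by rw [abs_of_pos (by positivity)]) measurableSet_Ioi

end SubstitutionsOnIoi

variable {a : ℝ}

lemma integral_exp_neg_sq_sub_const_div_Ioi (ha : 0 ≤ a) :
    ∫ t in Ioi 0, exp (-(t - a / t) ^ 2) = √π / 2 := by
  rcases ha.eq_or_lt with rfl | ha
  · simpa using integral_gaussian_Ioi 1
  set f : ℝ → ℝ := fun t => exp (-(t - a / t) ^ 2)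
  have hf_nonneg (t : ℝ) : 0 ≤ f t := (exp_pos _).le
  have hf_meas : Measurable f := by fun_prop
  have hsum_int : IntegrableOn (fun t => (1 + a / t ^ 2) * f t) (Ioi 0) :=
    (integrableOn_comp_sub_const_div_Ioi_iff ha _).2 (by
      simpa using integrable_exp_neg_mul_sq one_pos)
  have hf_int : IntegrableOn f (Ioi 0) :=
    hsum_int.mono' hf_meas.aestronglyMeasurable <| .of_forall fun t => by
      rw [norm_of_nonneg (hf_nonneg t)]
      exact le_mul_of_one_le_left (hf_nonneg t) (le_add_of_nonneg_right (by positivity))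
  have hg_int : IntegrableOn (fun t => a / t ^ 2 * f t) (Ioi 0) :=
    hsum_int.mono' (by fun_prop : Measurable fun t => a / t ^ 2 * f t).aestronglyMeasurable <|
      .of_forall fun t => by
      rw [norm_of_nonneg (by positivity)]
      exact mul_le_mul_of_nonneg_right (by linarith) (hf_nonneg t)
  have hinv : ∫ t in Ioi 0, a / t ^ 2 * f t = ∫ t in Ioi 0, f t := by
    rw [← integral_comp_const_div_Ioi ha f]
    refine setIntegral_congr_fun measurableSet_Ioi fun t (ht : 0 < t) => ?_
    simp only [f, smul_eq_mul, div_div_cancel₀ ha.ne']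
    ring_nf
  have hsum : ∫ t in Ioi 0, (1 + a / t ^ 2) * f t = √π := by
    simpa using (integral_comp_sub_const_div_Ioi ha fun u => exp (-u ^ 2)).trans
      (by simpa using integral_gaussian 1)
  simp only [add_mul, one_mul] at hsum
  rw [integral_add hf_int hg_int, hinv] at hsum
  linarith

lemma integral_exp_neg_sq_div_sub_self_div_sqrt_Ioi (ha : 0 ≤ a) :
    ∫ r in Ioi 0, exp (-(a ^ 2 / r) - r) / √r = √π * exp (-(2 * a)) := by
  rw [← integral_comp_rpow_Ioi_of_pos two_pos]
  calc ∫ t in Ioi 0,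
        (2 * t ^ ((2 : ℝ) - 1)) • (exp (-(a ^ 2 / t ^ (2 : ℝ)) - t ^ (2 : ℝ)) / √(t ^ (2 : ℝ)))
      = ∫ t in Ioi 0, 2 * exp (-(2 * a)) * exp (-(t - a / t) ^ 2) := by
        refine setIntegral_congr_fun measurableSet_Ioi fun t (ht : 0 < t) => ?_
        have hexp : -(a ^ 2 / t ^ 2) - t ^ 2 = -(2 * a) + -(t - a / t) ^ 2 := by
          field_simp
          ring
        rw [show (2 : ℝ) - 1 = 1 by norm_num, rpow_one, rpow_two, sqrt_sq ht.le, hexp, exp_add,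
          smul_eq_mul]
        field_simp
    _ = √π * exp (-(2 * a)) := by
        rw [integral_const_mul, integral_exp_neg_sq_sub_const_div_Ioi ha]
        ring

/-- Gaussian scale mixture representation of the Laplace prior:
`∫₀^∞ √(λ/(4πr)) exp(−λx²/(4r)) exp(−r) dr = (√λ/2) exp(−√λ |x|)`. -/
theorem stmt_2 (l : ℝ) (hl : 0 < l) (x : ℝ) :
    ∫ r in Ioi (0 : ℝ),
        Real.sqrt (l / (4 * π * r)) * Real.exp (-(l * x ^ 2) / (4 * r)) * Real.exp (-r)
      = Real.sqrt l / 2 * Real.exp (-(Real.sqrt l * |x|)) := by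
  set a := √l * |x| / 2
  have ha : a ^ 2 = l * x ^ 2 / 4 := by
    rw [div_pow, mul_pow, sq_sqrt hl.le, sq_abs]
    norm_num
  have hintegrand : ∀ r ∈ Ioi (0 : ℝ),
      √(l / (4 * π * r)) * exp (-(l * x ^ 2) / (4 * r)) * exp (-r)
        = √l / (2 * √π) * (exp (-(a ^ 2 / r) - r) / √r) := by
    intro r (hr : 0 < r)
    have h4 : √4 = 2 := by rw [show (4 : ℝ) = 2 ^ 2 by norm_num, sqrt_sq zero_le_two]
    have hexp : exp (-(l * x ^ 2) / (4 * r)) * exp (-r) = exp (-(a ^ 2 / r) - r) := by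
      rw [← exp_add, ha]
      ring_nf
    rw [mul_assoc, hexp, sqrt_div' _ (by positivity), sqrt_mul' _ hr.le, sqrt_mul' _ pi_pos.le, h4]
    field_simp
  rw [setIntegral_congr_fun measurableSet_Ioi hintegrand, integral_const_mul,
    integral_exp_neg_sq_div_sub_self_div_sqrt_Ioi (by positivity),
    show 2 * a = √l * |x| by ring]
  field_simp
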